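/- arXiv:2205.01009 — 5 statements merged into one kernel-verified Lean document; each statement's English description precedes it below -/
import Mathlib

section
/- Let G have girth at least 5, let L1 ⊆ V(G), L2 = N(L1) \ L1, and suppose u ∉ L1. If every vertex of L2 has a neighbor in L1, then u has at most |L1| neighbors in L1 ∪ L2. -/
/-!
Send each neighbour `x` of `u` in `L₁ ∪ L₂` to itself if `x ∈ L₁`, and otherwise to a
neighbour of `x` in `L₁`. This map into `L₁` is injective: two distinct neighbours of `u`
with the same image `w ≠ u` would close a triangle or a 4-cycle through `u`.
-/

open SimpleGraph Finset

/-- `G` has girth at least 5: every cycle has length at least 5. -/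
def GirthAtLeastFive {V : Type*} (G : SimpleGraph V) : Prop :=
  ∀ (v : V) (w : G.Walk v v), w.IsCycle → 5 ≤ w.length

namespace GirthAtLeastFive

variable {V : Type*} {G : SimpleGraph V}

theorem not_adj_of_adj_of_adj (hg : GirthAtLeastFive G) {a b c : V}
    (hab : G.Adj a b) (hbc : G.Adj b c) : ¬ G.Adj c a := by
  intro hca
  have hcycle : (Walk.cons hab (Walk.cons hbc (Walk.cons hca Walk.nil))).IsCycle := by
    simp [Walk.cons_isCycle_iff, hab.ne, hbc.ne, hca.ne, hab.ne.symm, hca.ne.symm]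
  simpa using hg a _ hcycle

theorem subsingleton_commonNeighbors (hg : GirthAtLeastFive G) {a c : V} (hac : a ≠ c) :
    (G.commonNeighbors a c).Subsingleton := by
  intro b hb d hd
  obtain ⟨hab, hcb⟩ := (mem_commonNeighbors G).1 hb
  obtain ⟨had, hcd⟩ := (mem_commonNeighbors G).1 hd
  by_contra hbd
  have hcycle : (Walk.cons hab (Walk.cons hcb.symm
      (Walk.cons hcd (Walk.cons had.symm Walk.nil)))).IsCycle := by
    simp [Walk.cons_isCycle_iff, hab.ne, hcd.ne, had.ne, hac, hbd, hab.ne.symm, hcb.ne.symm,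
      had.ne.symm, Ne.symm hac]
  simpa using hg a _ hcycle

theorem eq_of_adj_of_eq_or_adj (hg : GirthAtLeastFive G) {u w x y : V} (huw : u ≠ w)
    (hux : G.Adj u x) (huy : G.Adj u y) (hx : x = w ∨ G.Adj x w) (hy : y = w ∨ G.Adj y w) :
    x = y := by
  rcases hx with rfl | hxw <;> rcases hy with rfl | hyw
  · rfl
  · exact (hg.not_adj_of_adj_of_adj hux hyw.symm huy.symm).elim
  · exact (hg.not_adj_of_adj_of_adj huy hxw.symm hux.symm).elim
  · exact hg.subsingleton_commonNeighbors huw ⟨hux, hxw.symm⟩ ⟨huy, hyw.symm⟩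

end GirthAtLeastFive

/-- If `G` has girth at least 5, `L₂` is the (open) neighborhood of the set
`L₁`, and `u ∉ L₁`, then `u` has at most `|L₁|` neighbors in `L₁ ∪ L₂`. -/
theorem neighbors_in_L1_union_L2_le {V : Type*} [Fintype V] [DecidableEq V]
    (G : SimpleGraph V) [DecidableRel G.Adj]
    (hg : GirthAtLeastFive G) (L₁ L₂ : Finset V)
    (hL₂ : L₂ = Finset.univ.filter (fun v => v ∉ L₁ ∧ ∃ w ∈ L₁, G.Adj v w))
    (u : V) (hu : u ∉ L₁) :
    (G.neighborFinset u ∩ (L₁ ∪ L₂)).card ≤ L₁.card := by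
  have hrep : ∀ x ∈ L₁ ∪ L₂, ∃ w ∈ L₁, x = w ∨ G.Adj x w := by
    intro x hx
    rcases mem_union.1 hx with hx₁ | hx₂
    · exact ⟨x, hx₁, Or.inl rfl⟩
    · rw [hL₂, mem_filter] at hx₂
      obtain ⟨w, hw, hxw⟩ := hx₂.2.2
      exact ⟨w, hw, Or.inr hxw⟩
  choose! r hrL₁ hr using hrep
  refine card_le_card_of_injOn r (fun x hx => hrL₁ x (mem_inter.1 hx).2) ?_
  intro x hx y hy hxy
  simp only [coe_inter, Set.mem_inter_iff, coe_neighborFinset, mem_neighborSet, mem_coe] at hx hy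
  have hur : u ≠ r x := (ne_of_mem_of_not_mem (hrL₁ x hx.2) hu).symm
  exact hg.eq_of_adj_of_eq_or_adj hur hx.1 hy.1 (hr x hx.2) (hxy ▸ hr y hy.2)
end

section
/- Let G have girth at least 5 and let u be a vertex such that at least k^2 neighbors of u each have a neighbor other than u. Then G contains, as an induced subgraph, a subdivided k-star with center u in which every branch has length exactly 2 (i.e., there exist distinct vertices x_1,...,x_k ∈ N(u) and distinct y_1,...,y_k with y_i adjacent to x_i, y_i ∉ N[u], {x_1,...,x_k} independent, {y_1,...,y_k} independent, and y_i nonadjacent to x_j for i ≠ j). -/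
open SimpleGraph Finset

private lemma no_tri {V : Type*} {G : SimpleGraph V} (hg : GirthAtLeastFive G)
    {a b c : V} (hab : G.Adj a b) (hbc : G.Adj b c) (hca : G.Adj c a) : False := by
  have h1 : a ≠ b := hab.ne
  have h2 : b ≠ c := hbc.ne
  have h3 : c ≠ a := hca.ne
  have hcyc : (SimpleGraph.Walk.cons hab (.cons hbc (.cons hca .nil))).IsCycle := by
    simp_all [Walk.isCycle_def, Walk.isTrail_def, Sym2.eq_iff, Ne.symm]
  have := hg a _ hcyc
  simp [Walk.length_cons] at this

private lemma no_c4 {V : Type*} {G : SimpleGraph V} (hg : GirthAtLeastFive G)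
    {a b c d : V} (hac : a ≠ c) (hbd : b ≠ d)
    (hab : G.Adj a b) (hbc : G.Adj b c) (hcd : G.Adj c d) (hda : G.Adj d a) : False := by
  have h1 : a ≠ b := hab.ne
  have h2 : b ≠ c := hbc.ne
  have h3 : c ≠ d := hcd.ne
  have h4 : d ≠ a := hda.ne
  have hcyc : (SimpleGraph.Walk.cons hab (.cons hbc (.cons hcd (.cons hda .nil)))).IsCycle := by
    simp_all [Walk.isCycle_def, Walk.isTrail_def, Sym2.eq_iff, Ne.symm]
  have := hg a _ hcyc
  simp [Walk.length_cons] at this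

/-- If `G` has girth at least 5 and at least `k²` neighbors of `u` each have a
neighbor other than `u`, then `G` contains an induced subdivided `k`-star with
center `u`, all branches of length exactly 2. -/
theorem subdivided_star_exists {V : Type*} [Fintype V] [DecidableEq V]
    (G : SimpleGraph V) [DecidableRel G.Adj]
    (hg : GirthAtLeastFive G) (k : ℕ) (hk : 1 ≤ k) (u : V)
    (hbig : k ^ 2 ≤ ((G.neighborFinset u).filter
      (fun x => ∃ y, y ≠ u ∧ G.Adj x y)).card) :
    ∃ x y : Fin k → V,
      Function.Injective x ∧ Function.Injective y ∧
      (∀ i, G.Adj u (x i)) ∧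
      (∀ i, G.Adj (x i) (y i)) ∧
      (∀ i, y i ≠ u ∧ ¬ G.Adj u (y i)) ∧
      (∀ i j, ¬ G.Adj (x i) (x j)) ∧
      (∀ i j, ¬ G.Adj (y i) (y j)) ∧
      (∀ i j, i ≠ j → ¬ G.Adj (y i) (x j)) := by
  classical
  set S := (G.neighborFinset u).filter (fun x => ∃ y, y ≠ u ∧ G.Adj x y) with hSdef
  have hxu : ∀ x ∈ S, G.Adj u x := by
    intro x hx
    rw [hSdef, Finset.mem_filter, SimpleGraph.mem_neighborFinset] at hx
    exact hx.1
  have hSex : ∀ x, x ∈ S → ∃ y, y ≠ u ∧ G.Adj x y := by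
    intro x hx
    rw [hSdef, Finset.mem_filter] at hx
    exact hx.2
  choose! f hfu hfa using hSex
  -- basic consequences of girth ≥ 5
  have hufx : ∀ x ∈ S, ¬ G.Adj u (f x) := by
    intro x hx h
    exact no_tri hg (hxu x hx) (hfa x hx) h.symm
  have hxx : ∀ x ∈ S, ∀ x' ∈ S, x ≠ x' → ¬ G.Adj x x' := by
    intro x hx x' hx' hne h
    exact no_tri hg (hxu x hx) h (hxu x' hx').symm
  have hfx : ∀ x ∈ S, ∀ x' ∈ S, x ≠ x' → ¬ G.Adj (f x) x' := by
    intro x hx x' hx' hne h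
    exact no_c4 hg (fun he => hfu x hx he.symm) hne (hxu x hx) (hfa x hx) h (hxu x' hx').symm
  have hinj : ∀ x ∈ S, ∀ x' ∈ S, x ≠ x' → f x ≠ f x' := by
    intro x hx x' hx' hne he
    exact hfx x hx x' hx' hne (he ▸ (hfa x' hx').symm)
  -- find an independent set of size k among the images
  have key : ∃ T : Finset V, T ⊆ S ∧ T.card = k ∧
      ∀ x ∈ T, ∀ x' ∈ T, x ≠ x' → ¬ G.Adj (f x) (f x') := by
    by_cases hcase : ∃ x₀ ∈ S, k ≤ (S.filter (fun x' => G.Adj (f x₀) (f x'))).card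
    · obtain ⟨x₀, hx₀, hcard⟩ := hcase
      obtain ⟨T, hTN, hTcard⟩ := Finset.exists_subset_card_eq hcard
      refine ⟨T, hTN.trans (Finset.filter_subset _ _), hTcard, ?_⟩
      intro a ha b hb hab h
      have ha' := hTN ha
      have hb' := hTN hb
      rw [Finset.mem_filter] at ha' hb'
      exact no_tri hg ha'.2 h hb'.2.symm
    · push_neg at hcase
      have grow : ∀ m, m ≤ k → ∃ T : Finset V, T ⊆ S ∧ T.card = m ∧
          ∀ x ∈ T, ∀ x' ∈ T, x ≠ x' → ¬ G.Adj (f x) (f x') := by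
        intro m
        induction m with
        | zero => intro _; exact ⟨∅, by simp⟩
        | succ m ih =>
          intro hm
          obtain ⟨T, hTS, hTcard, hTind⟩ := ih (Nat.le_of_succ_le hm)
          set B := T.biUnion (fun t => insert t (S.filter (fun x' => G.Adj (f t) (f x')))) with hBdef
          have hBcard : B.card < S.card := by
            have h1 : B.card ≤ m * k := by
              calc B.card ≤ ∑ t ∈ T, (insert t (S.filter (fun x' => G.Adj (f t) (f x')))).card :=
                    Finset.card_biUnion_le
                _ ≤ ∑ t ∈ T, k := by
                    refine Finset.sum_le_sum ?_
                    intro t ht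
                    have := Finset.card_insert_le t (S.filter (fun x' => G.Adj (f t) (f x')))
                    have h2 := hcase t (hTS ht)
                    omega
                _ = m * k := by rw [Finset.sum_const, hTcard, smul_eq_mul]
            have h3 : m * k < k * k := by
              have hmk : m < k := hm
              exact Nat.mul_lt_mul_of_lt_of_le hmk le_rfl (Nat.lt_of_lt_of_le (Nat.lt_of_lt_of_le (Nat.pos_of_ne_zero (by omega)) le_rfl) le_rfl)
            have h4 : k * k ≤ S.card := by rw [← pow_two]; exact hbig
            omega
          have hns : ¬ S ⊆ B := fun hsub => absurd (Finset.card_le_card hsub) (by omega)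
          obtain ⟨x, hxS, hxB⟩ := Finset.not_subset.mp hns
          have hxT : x ∉ T := by
            intro hxT
            exact hxB (Finset.mem_biUnion.mpr ⟨x, hxT, Finset.mem_insert_self _ _⟩)
          refine ⟨insert x T, ?_, ?_, ?_⟩
          · exact Finset.insert_subset hxS hTS
          · rw [Finset.card_insert_of_notMem hxT, hTcard]
          · intro a ha b hb hab h
            rw [Finset.mem_insert] at ha hb
            rcases ha with ha | ha <;> rcases hb with hb | hb
            · exact hab (ha.trans hb.symm)
            · subst ha
              exact hxB (Finset.mem_biUnion.mpr ⟨b, hb, Finset.mem_insert_of_mem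
                (Finset.mem_filter.mpr ⟨hxS, h.symm⟩)⟩)
            · subst hb
              exact hxB (Finset.mem_biUnion.mpr ⟨a, ha, Finset.mem_insert_of_mem
                (Finset.mem_filter.mpr ⟨hxS, h⟩)⟩)
            · exact hTind a ha b hb hab h
      exact grow k le_rfl
  obtain ⟨T, hTS, hTcard, hTind⟩ := key
  let e : T ≃ Fin k := T.equivFinOfCardEq hTcard
  set X : Fin k → V := fun i => ((e.symm i : T) : V) with hXdef
  have hXT : ∀ i, X i ∈ T := fun i => (e.symm i).2
  have hXS : ∀ i, X i ∈ S := fun i => hTS (hXT i)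
  have hXinj : Function.Injective X := by
    intro i j h
    exact e.symm.injective (Subtype.coe_injective h)
  refine ⟨X, fun i => f (X i), hXinj, ?_, fun i => hxu _ (hXS i), fun i => hfa _ (hXS i),
    fun i => ⟨hfu _ (hXS i), hufx _ (hXS i)⟩, ?_, ?_, ?_⟩
  · intro i j h
    by_contra hne
    exact hinj _ (hXS i) _ (hXS j) (fun he => hne (hXinj he)) h
  · intro i j h
    by_cases hij : X i = X j
    · rw [hij] at h; exact G.irrefl h
    · exact hxx _ (hXS i) _ (hXS j) hij h
  · intro i j h
    by_cases hij : X i = X j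
    · simp only at h
      rw [hij] at h; exact G.irrefl h
    · exact hTind _ (hXT i) _ (hXT j) hij h
  · intro i j hij h
    exact hfx _ (hXS i) _ (hXS j) (fun he => hij (hXinj he)) h
end

section
/- Twin vertex deletion preserves Token Sliding reachability: if u, v ∉ I_s ∪ I_t are vertices of G with N(u) = N(v), then there is a token-sliding reconfiguration sequence from I_s to I_t in G if and only if there is one in G − v. -/
/-- `I` is an independent set of size `k` (a token configuration). -/
def IndepConfig {V : Type*} (G : SimpleGraph V) (k : ℕ) (I : Finset V) : Prop :=
  I.card = k ∧ ∀ a ∈ I, ∀ b ∈ I, ¬ G.Adj a b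

/-- A single token slide: a token slides from `x` to an adjacent vertex `y`,
transforming the independent set `I` of size `k` into the independent set `J`. -/
def TSStep {V : Type*} [DecidableEq V] (G : SimpleGraph V) (k : ℕ)
    (I J : Finset V) : Prop :=
  IndepConfig G k I ∧ IndepConfig G k J ∧
    ∃ x y, G.Adj x y ∧ x ∈ I ∧ y ∉ I ∧ J = insert y (I.erase x)

/-- Token sliding reachability: a finite sequence of token slides. -/
def TSReach {V : Type*} [DecidableEq V] (G : SimpleGraph V) (k : ℕ)
    (I J : Finset V) : Prop :=
  Relation.ReflTransGen (TSStep G k) I J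

/-!
If `G = H.comap f` and `f` is injective on a configuration, then `f` maps every slide sequence
in `G` to one in `H` and stays injective along it: vertices with the same image are twins, so a
token could only slide onto the twin of another token if those two tokens were adjacent.
For a twin `v` of `u`, apply this to the inclusion `G - v → G` for one direction, and for the
other to the retraction `G → G - v` sending `v` to `u`, which pulls `G - v` back to `G` exactly
because `u` and `v` are twins.
-/

section Image

variable {V W : Type*} [DecidableEq W] {H : SimpleGraph W} {f : V → W} {k : ℕ}

theorem IndepConfig.image {I : Finset V} (hI : IndepConfig (H.comap f) k I)
    (hf : Set.InjOn f I) : IndepConfig H k (I.image f) := by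
  refine ⟨(Finset.card_image_of_injOn hf).trans hI.1, ?_⟩
  simp only [Finset.mem_image]
  rintro _ ⟨a, ha, rfl⟩ _ ⟨b, hb, rfl⟩
  exact hI.2 a ha b hb

theorem image_notMem_image_of_adj {I : Finset V} (hI : IndepConfig (H.comap f) k I) {x y : V}
    (hx : x ∈ I) (hxy : (H.comap f).Adj x y) : f y ∉ I.image f := by
  rintro hy
  obtain ⟨z, hz, hzy⟩ := Finset.mem_image.mp hy
  rw [SimpleGraph.comap_adj, ← hzy] at hxy
  exact hI.2 x hx z hz hxy

theorem Finset.image_erase_of_injOn [DecidableEq V] {s : Finset V} (hf : Set.InjOn f s) {a : V}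
    (ha : a ∈ s) : (s.erase a).image f = (s.image f).erase (f a) := by
  ext b
  simp only [Finset.mem_image, Finset.mem_erase]
  constructor
  · rintro ⟨c, ⟨hca, hc⟩, rfl⟩
    exact ⟨fun h => hca (hf hc ha h), c, hc, rfl⟩
  · rintro ⟨hb, c, hc, rfl⟩
    exact ⟨c, ⟨fun h => hb (h ▸ rfl), hc⟩, rfl⟩

theorem TSStep.image [DecidableEq V] {I J : Finset V} (h : TSStep (H.comap f) k I J)
    (hf : Set.InjOn f I) : Set.InjOn f J ∧ TSStep H k (I.image f) (J.image f) := by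
  obtain ⟨hI, hJ, x, y, hxy, hx, hy, rfl⟩ := h
  have hfy := image_notMem_image_of_adj hI hx hxy
  have hinj : Set.InjOn f ↑(insert y (I.erase x)) := by
    rw [Finset.coe_insert, Set.injOn_insert fun h => hy (Finset.mem_of_mem_erase h)]
    refine ⟨hf.mono (Finset.coe_subset.mpr (Finset.erase_subset x I)), ?_⟩
    rintro ⟨z, hz, hzy⟩
    exact hfy (Finset.mem_image.mpr ⟨z, Finset.mem_of_mem_erase hz, hzy⟩)
  refine ⟨hinj, hI.image hf, hJ.image hinj, f x, f y, hxy,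
    Finset.mem_image_of_mem f hx, hfy, ?_⟩
  rw [Finset.image_insert, Finset.image_erase_of_injOn hf hx]

theorem TSReach.image [DecidableEq V] {I J : Finset V} (h : TSReach (H.comap f) k I J)
    (hf : Set.InjOn f I) : TSReach H k (I.image f) (J.image f) := by
  suffices Set.InjOn f J ∧ TSReach H k (I.image f) (J.image f) from this.2
  induction h with
  | refl => exact ⟨hf, .refl⟩
  | tail _ hstep ih =>
    obtain ⟨hinj, hstep'⟩ := hstep.image ih.1
    exact ⟨hinj, ih.2.tail hstep'⟩

end Image

section Twin

variable {V : Type*} [DecidableEq V] {u v : V}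

def twinRetract (huv : u ≠ v) (a : V) : {x : V // x ≠ v} :=
  if h : a = v then ⟨u, huv⟩ else ⟨a, h⟩

theorem twinRetract_of_ne (huv : u ≠ v) {a : V} (ha : a ≠ v) : twinRetract huv a = ⟨a, ha⟩ :=
  dif_neg ha

theorem comap_comap_twinRetract {G : SimpleGraph V} (huv : u ≠ v)
    (htwin : G.neighborSet u = G.neighborSet v) :
    (G.comap Subtype.val).comap (twinRetract huv) = G := by
  have hadj (w : V) : G.Adj u w ↔ G.Adj v w := Set.ext_iff.mp htwin w
  ext a b
  simp only [SimpleGraph.comap_adj, twinRetract]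
  split_ifs with ha hb hb
  · subst ha hb; simp
  · subst ha; exact hadj b
  · subst hb; simpa only [G.adj_comm a] using hadj a
  · rfl

theorem image_twinRetract_of_notMem (huv : u ≠ v) {I : Finset V} (hv : v ∉ I) :
    I.image (twinRetract huv) = I.subtype (· ≠ v) := by
  ext ⟨a, ha⟩
  simp only [Finset.mem_image, Finset.mem_subtype]
  constructor
  · rintro ⟨b, hb, hba⟩
    rw [twinRetract_of_ne huv (ne_of_mem_of_not_mem hb hv), Subtype.mk.injEq] at hba
    exact hba ▸ hb
  · exact fun h => ⟨a, h, twinRetract_of_ne huv ha⟩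

theorem twinRetract_injOn (huv : u ≠ v) : Set.InjOn (twinRetract huv) {a | a ≠ v} :=
  fun a ha b hb h => by
    rwa [twinRetract_of_ne huv ha, twinRetract_of_ne huv hb, Subtype.mk.injEq] at h

theorem image_val_subtype_ne_of_notMem {I : Finset V} (hv : v ∉ I) :
    (I.subtype (· ≠ v)).image Subtype.val = I := by
  ext a
  simpa using fun ha => ne_of_mem_of_not_mem ha hv

end Twin

theorem twin_deletion_preserves_reachability_general {V : Type*} [DecidableEq V]
    (G : SimpleGraph V) (k : ℕ) (Is It : Finset V)
    (u v : V) (huv : u ≠ v)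
    (hv : v ∉ Is ∪ It)
    (htwin : G.neighborSet u = G.neighborSet v) :
    TSReach G k Is It ↔
      TSReach ((G.comap (Subtype.val : {x : V // x ≠ v} → V))) k
        (Is.subtype (· ≠ v)) (It.subtype (· ≠ v)) := by
  obtain ⟨hvs, hvt⟩ := Finset.notMem_union.mp hv
  constructor
  · intro h
    rw [← comap_comap_twinRetract huv htwin] at h
    have := h.image ((twinRetract_injOn huv).mono fun a ha => ne_of_mem_of_not_mem ha hvs)
    rwa [image_twinRetract_of_notMem huv hvs, image_twinRetract_of_notMem huv hvt] at this
  · intro h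
    have := h.image Subtype.val_injective.injOn
    rwa [image_val_subtype_ne_of_notMem hvs, image_val_subtype_ne_of_notMem hvt] at this

/-- Deleting a twin vertex preserves Token Sliding reachability: if
`u, v ∉ Iₛ ∪ Iₜ` have the same open neighborhood, then `Iₛ` reaches `Iₜ` in `G`
iff it does in `G - v`. -/
theorem twin_deletion_preserves_reachability {V : Type*} [DecidableEq V]
    (G : SimpleGraph V) (k : ℕ) (hk : 1 ≤ k) (Is It : Finset V)
    (hIs : IndepConfig G k Is) (hIt : IndepConfig G k It)
    (u v : V) (huv : u ≠ v)
    (hu : u ∉ Is ∪ It) (hv : v ∉ Is ∪ It)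
    (htwin : G.neighborSet u = G.neighborSet v) :
    TSReach G k Is It ↔
      TSReach ((G.comap (Subtype.val : {x : V // x ≠ v} → V))) k
        (Is.subtype (· ≠ v)) (It.subtype (· ≠ v)) :=
  twin_deletion_preserves_reachability_general G k Is It u v huv hv htwin
end

section
/- Let G have girth at least 5 and let u be a vertex whose degree exceeds the number of tokens k, where I is an independent set with u ∈ I and |I| = k. Then there exists a neighbor w of u such that (I \ {u}) ∪ {w} is an independent set (i.e., the token on u can slide to w). -/
open Finset

namespace GirthAtLeastFive

variable {V : Type*} {G : SimpleGraph V}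

theorem eq_of_adj_of_adj (hg : GirthAtLeastFive G) {u v w₁ w₂ : V} (huv : u ≠ v)
    (hu₁ : G.Adj u w₁) (hv₁ : G.Adj v w₁) (hu₂ : G.Adj u w₂) (hv₂ : G.Adj v w₂) :
    w₁ = w₂ := by
  by_contra hw
  let c : G.Walk u u := .cons hu₁ (.cons hv₁.symm (.cons hv₂ (.cons hu₂.symm .nil)))
  have hc : c.IsCycle := by
    simp only [c, SimpleGraph.Walk.isCycle_def, SimpleGraph.Walk.isTrail_def,
      SimpleGraph.Walk.edges_cons, SimpleGraph.Walk.support_cons, SimpleGraph.Walk.edges_nil,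
      SimpleGraph.Walk.support_nil, List.tail_cons, List.nodup_cons, List.mem_cons,
      List.not_mem_nil, Sym2.eq_iff]
    have := hu₁.ne; have := hv₁.ne; have := hu₂.ne; have := hv₂.ne
    simp_all [eq_comm]
  simpa [c] using hg u c hc

variable [Fintype V] [DecidableEq V] [DecidableRel G.Adj]

theorem card_inter_neighborFinset_le_one (hg : GirthAtLeastFive G) {u v : V} (huv : u ≠ v) :
    #(G.neighborFinset u ∩ G.neighborFinset v) ≤ 1 :=
  card_le_one.mpr fun _ h₁ _ h₂ => by
    simp only [mem_inter, SimpleGraph.mem_neighborFinset] at h₁ h₂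
    exact hg.eq_of_adj_of_adj huv h₁.1 h₁.2 h₂.1 h₂.2

theorem exists_adj_forall_not_adj (hg : GirthAtLeastFive G) {u : V} {S : Finset V}
    (hu : u ∉ S) (hS : #S < G.degree u) : ∃ w, G.Adj u w ∧ ∀ v ∈ S, ¬ G.Adj w v := by
  set blocked := S.biUnion fun v => G.neighborFinset u ∩ G.neighborFinset v
  have hblocked : #blocked < #(G.neighborFinset u) :=
    calc #blocked ≤ ∑ v ∈ S, #(G.neighborFinset u ∩ G.neighborFinset v) := card_biUnion_le
      _ ≤ ∑ _v ∈ S, 1 := sum_le_sum fun v hv =>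
          hg.card_inter_neighborFinset_le_one fun h => hu (h ▸ hv)
      _ < #(G.neighborFinset u) := by simpa using hS
  obtain ⟨w, hwu, hw⟩ := exists_mem_notMem_of_card_lt_card hblocked
  rw [SimpleGraph.mem_neighborFinset] at hwu
  refine ⟨w, hwu, fun v hv hwv => hw (mem_biUnion.mpr ⟨v, hv, ?_⟩)⟩
  simp [hwu, hwv.symm]

end GirthAtLeastFive

/-- In a graph of girth at least 5, a token on a vertex `u` of degree greater
than the number of tokens `k` can always slide to some neighbor. -/
theorem high_degree_token_can_slide {V : Type*} [Fintype V] [DecidableEq V]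
    (G : SimpleGraph V) [DecidableRel G.Adj]
    (hg : GirthAtLeastFive G) (k : ℕ) (I : Finset V)
    (hcard : I.card = k) (hind : ∀ a ∈ I, ∀ b ∈ I, ¬ G.Adj a b)
    (u : V) (hu : u ∈ I) (hdeg : k < G.degree u) :
    ∃ w, G.Adj u w ∧
      ∀ a ∈ insert w (I.erase u), ∀ b ∈ insert w (I.erase u), ¬ G.Adj a b := by
  have hcard_erase : #(I.erase u) < G.degree u := by
    rw [card_erase_of_mem hu]; omega
  obtain ⟨w, huw, hw⟩ := hg.exists_adj_forall_not_adj (notMem_erase u I) hcard_erase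
  refine ⟨w, huw, fun a ha b hb hab => ?_⟩
  rcases mem_insert.mp ha with rfl | haI <;> rcases mem_insert.mp hb with rfl | hbI
  · exact G.loopless.irrefl _ hab
  · exact hw b hbI hab
  · exact hw a haI hab.symm
  · exact hind a (mem_of_mem_erase haI) b (mem_of_mem_erase hbI) hab
end

section
/- Let G have girth at least 5, let L2 be a vertex set of size at most s, and let C be a connected subgraph disjoint from L2 in which no two vertices are twins and every vertex of C with a unique neighbor inside C has at least one neighbor in L2. If v ∈ V(C) has d neighbors in C of which at most t have another neighbor in C, then d ≤ t + s, because the d − t neighbors of v having only v as neighbor in C have pairwise distinct neighbors in L2. -/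
lemma no_four_cycle {V : Type*} {G : SimpleGraph V} (hg : GirthAtLeastFive G)
    {a b c d : V} (hab : G.Adj a b) (hbc : G.Adj b c) (hcd : G.Adj c d)
    (hda : G.Adj d a) (hac : a ≠ c) (hbd : b ≠ d) : False := by
  have hab' := hab.ne
  have hbc' := hbc.ne
  have hcd' := hcd.ne
  have hda' := hda.ne
  have hcyc : (SimpleGraph.Walk.cons hab (SimpleGraph.Walk.cons hbc
      (SimpleGraph.Walk.cons hcd (SimpleGraph.Walk.cons hda SimpleGraph.Walk.nil)))).IsCycle := by
    rw [SimpleGraph.Walk.cons_isCycle_iff]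
    constructor
    · simp [SimpleGraph.Walk.isPath_def]
      refine ⟨⟨hbc', hbd, hab'.symm⟩, ⟨hcd', hac.symm⟩, hda'⟩
    · simp [Sym2.eq_iff]
      tauto
  have := hg a _ hcyc
  simp at this

/-- Degree bound in twin-free components attached to a small set `L₂`: if `G`
has girth at least 5, `C` is a connected induced subgraph disjoint from `L₂`
(with `|L₂| ≤ s`), no two vertices of `C` are twins, every vertex of `C` whose
only neighbor in `C` is `v` has a neighbor in `L₂`, `v ∈ C` has `d` neighbors
in `C` and at most `t` of them have another neighbor in `C`, then `d ≤ t + s`. -/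
theorem bad_component_degree_bound {V : Type*} [Fintype V] [DecidableEq V]
    (G : SimpleGraph V) [DecidableRel G.Adj]
    (hg : GirthAtLeastFive G) (s t : ℕ)
    (L₂ C : Finset V) (hL₂ : L₂.card ≤ s) (hdisj : Disjoint C L₂)
    (hconn : (G.induce (↑C : Set V)).Connected)
    (htwinfree : ∀ a ∈ C, ∀ b ∈ C, a ≠ b → G.neighborSet a ≠ G.neighborSet b)
    (v : V) (hv : v ∈ C)
    (hpend : ∀ w ∈ C, G.Adj v w → G.neighborFinset w ∩ C ⊆ {v} →
      ∃ z ∈ L₂, G.Adj w z)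
    (d : ℕ) (hd : d = (G.neighborFinset v ∩ C).card)
    (ht : ((G.neighborFinset v ∩ C).filter
      (fun w => ∃ z ∈ C, z ≠ v ∧ G.Adj w z)).card ≤ t) :
    d ≤ t + s := by
  classical
  set N := G.neighborFinset v ∩ C with hN
  set Q := N.filter (fun w => ¬ ∃ z ∈ C, z ≠ v ∧ G.Adj w z) with hQ
  have hsplit : (N.filter (fun w => ∃ z ∈ C, z ≠ v ∧ G.Adj w z)).card + Q.card = N.card :=
    Finset.card_filter_add_card_filter_not _
  have key : ∀ w ∈ Q, ∃ z ∈ L₂, G.Adj w z := by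
    intro w hw
    rw [hQ, Finset.mem_filter] at hw
    obtain ⟨hwN, hno⟩ := hw
    rw [hN, Finset.mem_inter, SimpleGraph.mem_neighborFinset] at hwN
    refine hpend w hwN.2 hwN.1 ?_
    intro u hu
    rw [Finset.mem_inter, SimpleGraph.mem_neighborFinset] at hu
    rw [Finset.mem_singleton]
    by_contra hne
    exact hno ⟨u, hu.2, hne, hu.1⟩
  choose! f hf1 hf2 using key
  have hinj : Set.InjOn f Q := by
    intro w1 hw1 w2 hw2 heq
    by_contra hne
    have hw1' := hw1; have hw2' := hw2
    simp only [hQ, Finset.coe_filter, Set.mem_setOf_eq] at hw1' hw2'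
    have h1N := hw1'.1; have h2N := hw2'.1
    rw [hN, Finset.mem_inter, SimpleGraph.mem_neighborFinset] at h1N h2N
    have hz1 : f w1 ∈ L₂ := hf1 w1 hw1
    have hvz : v ≠ f w1 := fun h => (Finset.disjoint_left.mp hdisj hv) (h ▸ hz1)
    exact no_four_cycle hg h1N.1 (hf2 w1 hw1) (heq ▸ (hf2 w2 hw2).symm) h2N.1.symm hvz hne
  have hQcard : Q.card ≤ L₂.card := by
    apply Finset.card_le_card_of_injOn f (fun w hw => hf1 w hw)
    intro w1 hw1 w2 hw2
    exact hinj (by simpa using hw1) (by simpa using hw2)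
  omega
end
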